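/- arXiv:2605.01894 — 3 statements merged into one kernel-verified Lean document; each statement's English description precedes it below -/
import Mathlib

section
/- Let $n \geq 1$ be an integer and $p \in (0,1)$. Let $B$ be a binomial random variable with parameters $(n,p)$ and $L$ be a Poisson random variable with parameter $np$. Then for every set $D$ of nonnegative integers, $|P(L \in D) - P(B \in D)| \leq np^2$. -/
/-!
Both mass functions are built by convolution: `b(n+1) = b(1) ∗ b(n)` and
`π(r + s) = π(r) ∗ π(s)`. For nonnegative `g`, `f'` the `ℓ¹` distance of convolutions satisfies
`‖f ∗ g - f' ∗ g'‖₁ ≤ ‖f - f'‖₁ ‖g‖₁ + ‖f'‖₁ ‖g - g'‖₁`, so starting from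
`‖b(1) - π(p)‖₁ = 2p(1 - e^{-p}) ≤ 2p²` induction gives `‖b(n) - π(np)‖₁ ≤ 2np²`.
Two mass functions of the same total mass differ on any set `D` by at most half their
`ℓ¹` distance.
-/

open MeasureTheory Real Finset

noncomputable def poissonProb (r : ℝ) (k : ℕ) : ℝ := exp (-r) * r ^ k / Nat.factorial k

noncomputable def binomialProb (n : ℕ) (p : ℝ) (k : ℕ) : ℝ :=
  n.choose k * p ^ k * (1 - p) ^ (n - k)

def natConv (f g : ℕ → ℝ) (k : ℕ) : ℝ := ∑ j ∈ range (k + 1), f j * g (k - j)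

section NatConv

variable {f f' g g' : ℕ → ℝ}

theorem hasSum_natConv {a b : ℝ} (hf : HasSum f a) (hg : HasSum g b) :
    HasSum (natConv f g) (a * b) := by
  rw [← hf.tsum_eq, ← hg.tsum_eq]
  exact hasSum_sum_range_mul_of_summable_norm hf.summable.norm hg.summable.norm

theorem abs_natConv_sub_natConv_le (hf' : 0 ≤ f') (hg : 0 ≤ g) (k : ℕ) :
    |natConv f g k - natConv f' g' k| ≤
      natConv (fun j ↦ |f j - f' j|) g k + natConv f' (fun j ↦ |g j - g' j|) k := by
  simp only [natConv, ← sum_sub_distrib, ← sum_add_distrib]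
  refine (abs_sum_le_sum_abs _ _).trans (sum_le_sum fun j _ ↦ ?_)
  calc |f j * g (k - j) - f' j * g' (k - j)|
      = |(f j - f' j) * g (k - j) + f' j * (g (k - j) - g' (k - j))| := by ring_nf
    _ ≤ |f j - f' j| * g (k - j) + f' j * |g (k - j) - g' (k - j)| := by
      refine (abs_add_le _ _).trans_eq ?_
      rw [abs_mul, abs_mul, abs_of_nonneg (hg _), abs_of_nonneg (hf' _)]

theorem tsum_abs_natConv_sub_natConv_le (hf : Summable f) (hf' : Summable f')
    (hg : Summable g) (hg' : Summable g') (hf'0 : 0 ≤ f') (hg0 : 0 ≤ g) :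
    ∑' k, |natConv f g k - natConv f' g' k| ≤
      (∑' k, |f k - f' k|) * ∑' k, g k + (∑' k, f' k) * ∑' k, |g k - g' k| := by
  have hbound := (hasSum_natConv (hf.sub hf').abs.hasSum hg.hasSum).add
    (hasSum_natConv hf'.hasSum (hg.sub hg').abs.hasSum)
  refine (Summable.tsum_le_tsum (abs_natConv_sub_natConv_le hf'0 hg0) ?_ hbound.summable).trans
    hbound.tsum_eq.le
  exact ((hasSum_natConv hf.hasSum hg.hasSum).summable.sub
    (hasSum_natConv hf'.hasSum hg'.hasSum).summable).abs

end NatConv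

section Poisson

theorem poissonProb_nonneg {r : ℝ} (hr : 0 ≤ r) (k : ℕ) : 0 ≤ poissonProb r k := by
  unfold poissonProb; positivity

@[simp]
theorem poissonProb_zero (r : ℝ) : poissonProb r 0 = exp (-r) := by
  simp [poissonProb]

@[simp]
theorem poissonProb_one (r : ℝ) : poissonProb r 1 = r * exp (-r) := by
  simp [poissonProb, mul_comm]

theorem hasSum_poissonProb {r : ℝ} (hr : 0 ≤ r) : HasSum (poissonProb r) 1 :=
  ProbabilityTheory.hasSum_one_poissonMeasure ⟨r, hr⟩

theorem poissonProb_add (r s : ℝ) :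
    poissonProb (r + s) = natConv (poissonProb r) (poissonProb s) := by
  funext k
  simp only [natConv, poissonProb, add_pow, sum_div, neg_add, exp_add, mul_sum]
  refine sum_congr rfl fun j hj ↦ ?_
  have hjk : j ≤ k := Nat.lt_succ_iff.mp (mem_range.mp hj)
  have hchoose : (k.choose j : ℝ) ≠ 0 := Nat.cast_ne_zero.mpr (Nat.choose_pos hjk).ne'
  rw [← Nat.choose_mul_factorial_mul_factorial hjk]
  push_cast
  field_simp

end Poisson

section Binomial

variable {p : ℝ}

theorem binomialProb_nonneg (hp : p ∈ Set.Icc 0 1) (n k : ℕ) : 0 ≤ binomialProb n p k := by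
  obtain ⟨hp0, hp1⟩ := hp
  have : 0 ≤ 1 - p := sub_nonneg.mpr hp1
  unfold binomialProb
  positivity

theorem binomialProb_eq_zero_of_lt {n k : ℕ} (h : n < k) (p : ℝ) : binomialProb n p k = 0 := by
  simp [binomialProb, Nat.choose_eq_zero_of_lt h]

theorem hasSum_binomialProb (n : ℕ) (p : ℝ) : HasSum (binomialProb n p) 1 := by
  have hsum : ∑ k ∈ range (n + 1), binomialProb n p k = 1 := by
    have h := add_pow p (1 - p) n
    rw [add_sub_cancel, one_pow] at h
    rw [h]
    exact sum_congr rfl fun k _ ↦ by simp only [binomialProb]; ring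
  exact hsum ▸ hasSum_sum_of_ne_finset_zero fun k hk ↦
    binomialProb_eq_zero_of_lt (by simpa using hk) p

@[simp]
theorem binomialProb_zero_right (n : ℕ) (p : ℝ) : binomialProb n p 0 = (1 - p) ^ n := by
  simp [binomialProb]

@[simp]
theorem binomialProb_one_one (p : ℝ) : binomialProb 1 p 1 = p := by
  simp [binomialProb]

theorem natConv_binomialProb_one_zero (p : ℝ) (g : ℕ → ℝ) :
    natConv (binomialProb 1 p) g 0 = (1 - p) * g 0 := by
  simp [natConv]

theorem natConv_binomialProb_one_succ (p : ℝ) (g : ℕ → ℝ) (k : ℕ) :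
    natConv (binomialProb 1 p) g (k + 1) = (1 - p) * g (k + 1) + p * g k := by
  rw [natConv, sum_range_succ', sum_range_succ',
    sum_eq_zero fun j _ ↦ by rw [binomialProb_eq_zero_of_lt (by omega), zero_mul]]
  simp only [zero_add, binomialProb_one_one, binomialProb_zero_right, pow_one, Nat.add_sub_cancel,
    Nat.sub_zero]
  ring

theorem binomialProb_succ (n : ℕ) (p : ℝ) :
    binomialProb (n + 1) p = natConv (binomialProb 1 p) (binomialProb n p) := by
  funext k
  rcases k with _ | k
  · rw [natConv_binomialProb_one_zero, binomialProb_zero_right, binomialProb_zero_right, pow_succ']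
  rw [natConv_binomialProb_one_succ]
  rcases lt_or_ge k n with hk | hk
  · obtain ⟨m, rfl⟩ := Nat.exists_eq_add_of_lt hk
    have e1 : k + m + 1 + 1 - (k + 1) = m + 1 := by omega
    have e2 : k + m + 1 - (k + 1) = m := by omega
    have e3 : k + m + 1 - k = m + 1 := by omega
    simp only [binomialProb, e1, e2, e3, Nat.choose_succ_succ', Nat.cast_add]
    ring
  · rw [binomialProb_eq_zero_of_lt (Nat.lt_succ_of_le hk), mul_zero, zero_add]
    simp only [binomialProb, Nat.choose_succ_succ', Nat.choose_eq_zero_of_lt (Nat.lt_succ_of_le hk),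
      add_zero, Nat.add_sub_add_right]
    ring

-- `binomialProb 1 p - poissonProb p` is negative except at `1`, so the sum is `2 p (1 - exp (-p))`.
theorem tsum_abs_binomialProb_one_sub_poissonProb_le (hp : 0 ≤ p) :
    ∑' k, |binomialProb 1 p k - poissonProb p k| ≤ 2 * p ^ 2 := by
  have hpois := hasSum_poissonProb hp
  have hpois_tail : ∑' k, poissonProb p (k + 2) = 1 - exp (-p) - p * exp (-p) := by
    have h := hpois.summable.sum_add_tsum_nat_add 2
    rw [hpois.tsum_eq, sum_range_succ, sum_range_one, poissonProb_zero, poissonProb_one] at h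
    linarith
  have habs_tail (k : ℕ) :
      |binomialProb 1 p (k + 2) - poissonProb p (k + 2)| = poissonProb p (k + 2) := by
    rw [binomialProb_eq_zero_of_lt (by omega), zero_sub, abs_neg,
      abs_of_nonneg (poissonProb_nonneg hp _)]
  have hexp : 1 - p ≤ exp (-p) := by linarith [add_one_le_exp (-p)]
  have hexp' : exp (-p) ≤ 1 := exp_le_one_iff.mpr (by linarith)
  rw [← ((hasSum_binomialProb 1 p).summable.sub hpois.summable).abs.sum_add_tsum_nat_add 2,
    tsum_congr habs_tail, hpois_tail, sum_range_succ, sum_range_one, binomialProb_zero_right, binomialProb_one_one,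
    poissonProb_zero, poissonProb_one, pow_one]
  rw [abs_of_nonpos (by linarith), abs_of_nonneg (by nlinarith)]
  nlinarith

theorem tsum_abs_binomialProb_sub_poissonProb_le (hp : p ∈ Set.Icc 0 1) (n : ℕ) :
    ∑' k, |binomialProb n p k - poissonProb (n * p) k| ≤ 2 * n * p ^ 2 := by
  induction n with
  | zero =>
    have h (k : ℕ) : binomialProb 0 p k = poissonProb ((0 : ℕ) * p) k := by
      rcases k with _ | k <;> simp [binomialProb, poissonProb]
    simp [h]
  | succ n ih =>
    have hnp : 0 ≤ (n : ℝ) * p := mul_nonneg n.cast_nonneg hp.1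
    rw [show ((n + 1 : ℕ) : ℝ) * p = p + n * p by push_cast; ring, poissonProb_add,
      binomialProb_succ]
    refine (tsum_abs_natConv_sub_natConv_le (hasSum_binomialProb 1 p).summable
      (hasSum_poissonProb hp.1).summable (hasSum_binomialProb n p).summable
      (hasSum_poissonProb hnp).summable (poissonProb_nonneg hp.1)
      (binomialProb_nonneg hp n)).trans ?_
    rw [(hasSum_binomialProb n p).tsum_eq, (hasSum_poissonProb hp.1).tsum_eq]
    push_cast
    linarith [tsum_abs_binomialProb_one_sub_poissonProb_le hp.1]

end Binomial

theorem abs_tsum_subtype_sub_tsum_subtype_le {α : Type*} {f g : α → ℝ} {c : ℝ}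
    (hf : HasSum f c) (hg : HasSum g c) (D : Set α) :
    |∑' a : D, f a - ∑' a : D, g a| ≤ (∑' a, |f a - g a|) / 2 := by
  have hdiff : HasSum (fun a ↦ f a - g a) 0 := sub_self c ▸ hf.sub hg
  have hsplit := (hdiff.summable.subtype D).tsum_add_tsum_compl (hdiff.summable.subtype Dᶜ)
  have habs_split :=
    (hdiff.summable.abs.subtype D).tsum_add_tsum_compl (hdiff.summable.abs.subtype Dᶜ)
  rw [hdiff.tsum_eq] at hsplit
  have hD : |∑' a : D, (f a - g a)| ≤ ∑' a : D, |f a - g a| :=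
    norm_tsum_le_tsum_norm (f := fun a : ↑D ↦ f a - g a) (hdiff.summable.norm.subtype D)
  have hDc : |∑' a : ↑Dᶜ, (f a - g a)| ≤ ∑' a : ↑Dᶜ, |f a - g a| :=
    norm_tsum_le_tsum_norm (f := fun a : ↑Dᶜ ↦ f a - g a) (hdiff.summable.norm.subtype Dᶜ)
  have hsub : ∑' a : D, (f a - g a) = ∑' a : D, f a - ∑' a : D, g a :=
    (hf.summable.subtype D).tsum_sub (hg.summable.subtype D)
  rw [← hsub]
  rw [eq_neg_of_add_eq_zero_right hsplit, abs_neg] at hDc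
  linarith

/- `X` is not assumed measurable, so `μ` is used as an outer measure: subadditivity bounds the
masses of `X ⁻¹' D` and `X ⁻¹' Dᶜ` from above, and the total mass `1` forces equality. -/
theorem measure_preimage_eq_tsum {Ω α : Type*} [MeasurableSpace Ω] [Countable α]
    (μ : Measure Ω) [IsProbabilityMeasure μ] (X : Ω → α)
    (hX : ∑' a, μ {ω | X ω = a} = 1) (D : Set α) :
    μ (X ⁻¹' D) = ∑' a : D, μ {ω | X ω = a} := by
  have hle (E : Set α) : μ (X ⁻¹' E) ≤ ∑' a : E, μ {ω | X ω = a} := by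
    rw [show X ⁻¹' E = ⋃ a ∈ E, {ω | X ω = a} by ext; simp]
    exact measure_biUnion_le μ E.to_countable _
  have hsplit := ENNReal.summable.tsum_add_tsum_compl (s := D) (f := fun a ↦ μ {ω | X ω = a})
    ENNReal.summable
  rw [hX] at hsplit
  refine (hle D).antisymm (ENNReal.le_of_add_le_add_right (a := ∑' a : ↑Dᶜ, μ {ω | X ω = a})
    (fun h ↦ by simp [h] at hsplit) ?_)
  calc _ = μ (X ⁻¹' D ∪ X ⁻¹' Dᶜ) := by
        rw [hsplit, ← Set.preimage_union, Set.union_compl_self, Set.preimage_univ, measure_univ]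
    _ ≤ μ (X ⁻¹' D) + μ (X ⁻¹' Dᶜ) := measure_union_le _ _
    _ ≤ _ := by gcongr; exact hle Dᶜ

theorem toReal_measure_preimage_eq_tsum {Ω α : Type*} [MeasurableSpace Ω] [Countable α]
    (μ : Measure Ω) [IsProbabilityMeasure μ] (X : Ω → α) {f : α → ℝ}
    (hf : HasSum f 1) (hf0 : 0 ≤ f) (hX : ∀ a, μ {ω | X ω = a} = ENNReal.ofReal (f a))
    (D : Set α) :
    (μ (X ⁻¹' D)).toReal = ∑' a : D, f a := by
  have htotal : ∑' a, μ {ω | X ω = a} = 1 := by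
    simp_rw [hX, ← ENNReal.ofReal_tsum_of_nonneg hf0 hf.summable, hf.tsum_eq, ENNReal.ofReal_one]
  simp_rw [measure_preimage_eq_tsum μ X htotal D, hX,
    ← ENNReal.ofReal_tsum_of_nonneg (f := fun a : D ↦ f a) (fun a ↦ hf0 a) (hf.summable.subtype D)]
  exact ENNReal.toReal_ofReal (tsum_nonneg fun a ↦ hf0 a)

theorem poisson_binomial_approximation_general
    (n : ℕ) (p : ℝ) (hp : p ∈ Set.Ioo (0 : ℝ) 1)
    {Ω₁ Ω₂ : Type*} [MeasurableSpace Ω₁] [MeasurableSpace Ω₂]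
    (μ : Measure Ω₁) (ν : Measure Ω₂)
    [IsProbabilityMeasure μ] [IsProbabilityMeasure ν]
    (L : Ω₁ → ℕ) (B : Ω₂ → ℕ)
    (hL : ∀ k : ℕ, μ {ω | L ω = k} =
      ENNReal.ofReal (Real.exp (-(n * p)) * (n * p) ^ k / (Nat.factorial k)))
    (hB : ∀ k : ℕ, ν {ω | B ω = k} =
      ENNReal.ofReal ((n.choose k : ℝ) * p ^ k * (1 - p) ^ (n - k)))
    (D : Set ℕ) :
    |(μ (L ⁻¹' D)).toReal - (ν (B ⁻¹' D)).toReal| ≤ n * p ^ 2 := by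
  have hp' : p ∈ Set.Icc 0 1 := Set.Ioo_subset_Icc_self hp
  have hnp : 0 ≤ (n : ℝ) * p := mul_nonneg n.cast_nonneg hp'.1
  rw [toReal_measure_preimage_eq_tsum μ L (hasSum_poissonProb hnp) (poissonProb_nonneg hnp) hL,
    toReal_measure_preimage_eq_tsum ν B (hasSum_binomialProb n p) (binomialProb_nonneg hp' n) hB,
    abs_sub_comm]
  calc _ ≤ (∑' k, |binomialProb n p k - poissonProb (n * p) k|) / 2 :=
        abs_tsum_subtype_sub_tsum_subtype_le (hasSum_binomialProb n p) (hasSum_poissonProb hnp) D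
    _ ≤ 2 * n * p ^ 2 / 2 := by gcongr; exact tsum_abs_binomialProb_sub_poissonProb_le hp' n
    _ = n * p ^ 2 := by ring

/-- Poisson approximation to the binomial: if `L` is Poisson with parameter `n * p` and
`B` is binomial with parameters `(n, p)`, then for every set `D` of nonnegative integers,
`|P(L ∈ D) - P(B ∈ D)| ≤ n * p ^ 2`. -/
theorem poisson_binomial_approximation
    (n : ℕ) (hn : 1 ≤ n) (p : ℝ) (hp : p ∈ Set.Ioo (0 : ℝ) 1)
    {Ω₁ Ω₂ : Type*} [MeasurableSpace Ω₁] [MeasurableSpace Ω₂]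
    (μ : Measure Ω₁) (ν : Measure Ω₂)
    [IsProbabilityMeasure μ] [IsProbabilityMeasure ν]
    (L : Ω₁ → ℕ) (B : Ω₂ → ℕ)
    (hL : ∀ k : ℕ, μ {ω | L ω = k} =
      ENNReal.ofReal (Real.exp (-(n * p)) * (n * p) ^ k / (Nat.factorial k)))
    (hB : ∀ k : ℕ, ν {ω | B ω = k} =
      ENNReal.ofReal ((n.choose k : ℝ) * p ^ k * (1 - p) ^ (n - k)))
    (D : Set ℕ) :
    |(μ (L ⁻¹' D)).toReal - (ν (B ⁻¹' D)).toReal| ≤ n * p ^ 2 :=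
  poisson_binomial_approximation_general n p hp μ ν L B hL hB D
end

section
/- Let $p \in (0,1)$. There exist a probability space and random variables $L$ and $B$ defined on it such that $L$ has the Poisson distribution with parameter $p$, $B$ has the Bernoulli distribution with parameter $p$, and $E|L - B| = 2(e^{-p} - (1-p))$. -/
open MeasureTheory Real

namespace PBCoupling

/-- joint weights of the coupling -/
noncomputable def w (p : ℝ) : ℕ → ℝ
  | 0 => 1 - p
  | 1 => Real.exp (-p) - (1 - p)
  | (k+2) => Real.exp (-p) * (p ^ (k+1) / (k+1).factorial)

/-- the Poisson component -/
def Lf : ℕ → ℕ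
  | 0 => 0
  | 1 => 0
  | (k+2) => k+1

/-- the Bernoulli component -/
def Bf : ℕ → ℕ
  | 0 => 0
  | _+1 => 1

lemma exp_series (p : ℝ) : Real.exp p = ∑' n : ℕ, p ^ n / n.factorial := by
  rw [Real.exp_eq_exp_ℝ, NormedSpace.exp_eq_tsum_div]

lemma summable_shift (p : ℝ) :
    Summable (fun k : ℕ => p ^ (k+1) / (k+1).factorial) :=
  (summable_nat_add_iff 1).mpr (Real.summable_pow_div_factorial p)

lemma tsum_shift (p : ℝ) :
    ∑' k : ℕ, p ^ (k+1) / (k+1).factorial = Real.exp p - 1 := by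
  have h := Summable.tsum_eq_zero_add (Real.summable_pow_div_factorial p)
  rw [exp_series p, h]
  simp

lemma summable_w (p : ℝ) : Summable (w p) := by
  apply (summable_nat_add_iff 2).mp
  have : (fun n : ℕ => w p (n + 2)) =
      fun k : ℕ => Real.exp (-p) * (p ^ (k+1) / (k+1).factorial) := rfl
  rw [this]
  exact (summable_shift p).mul_left _

lemma w_nonneg {p : ℝ} (hp : p ∈ Set.Ioo (0:ℝ) 1) : ∀ n, 0 ≤ w p n := by
  obtain ⟨hp0, hp1⟩ := hp
  intro n
  match n with
  | 0 => simp [w]; linarith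
  | 1 =>
    have := Real.add_one_le_exp (-p)
    simp only [w]; linarith
  | (k+2) =>
    apply mul_nonneg (Real.exp_nonneg _)
    positivity

lemma tsum_w (p : ℝ) : ∑' n, w p n = 1 := by
  have hs := summable_w p
  have h1 : Summable (fun n => w p (n+1)) := (summable_nat_add_iff 1).mpr hs
  rw [Summable.tsum_eq_zero_add hs, Summable.tsum_eq_zero_add h1]
  have h2 : (fun n : ℕ => w p (n + 1 + 1)) =
      fun k : ℕ => Real.exp (-p) * (p ^ (k+1) / (k+1).factorial) := rfl
  rw [h2, tsum_mul_left, tsum_shift]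
  show (1 - p) + ((Real.exp (-p) - (1 - p)) + Real.exp (-p) * (Real.exp p - 1)) = 1
  have hexp : Real.exp (-p) * Real.exp p = 1 := by
    rw [← Real.exp_add]; simp
  ring_nf
  nlinarith [hexp]

/-- the sum `∑ k * p^(k+1)/(k+1)!` -/
lemma tsum_main (p : ℝ) :
    ∑' k : ℕ, (k : ℝ) * (p ^ (k+1) / (k+1).factorial)
      = p * Real.exp p - (Real.exp p - 1) := by
  have hterm : ∀ k : ℕ, (k : ℝ) * (p ^ (k+1) / (k+1).factorial)
      = p * (p ^ k / k.factorial) - p ^ (k+1) / (k+1).factorial := by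
    intro k
    rw [Nat.factorial_succ]
    have hk : ((k.factorial : ℝ)) ≠ 0 := by positivity
    have hk1 : ((k:ℝ) + 1) ≠ 0 := by positivity
    push_cast
    field_simp
    ring
  rw [tsum_congr hterm, Summable.tsum_sub ((Real.summable_pow_div_factorial p).mul_left p)
      (summable_shift p), tsum_mul_left, tsum_shift, ← exp_series]

end PBCoupling

open PBCoupling

set_option maxHeartbeats 1000000 in
/-- For `p ∈ (0,1)` there exists a coupling `(L, B)` of a Poisson(`p`) random variable `L`
and a Bernoulli(`p`) random variable `B` with `E|L - B| = 2 * (exp (-p) - (1 - p))`. -/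
theorem exists_poisson_bernoulli_coupling_eq (p : ℝ) (hp : p ∈ Set.Ioo (0 : ℝ) 1) :
    ∃ (Ω : Type) (_ : MeasurableSpace Ω) (μ : Measure Ω) (_ : IsProbabilityMeasure μ)
      (L B : Ω → ℕ), Measurable L ∧ Measurable B ∧
      (∀ k : ℕ, μ {ω | L ω = k} =
        ENNReal.ofReal (Real.exp (-p) * p ^ k / (Nat.factorial k))) ∧
      (μ {ω | B ω = 1} = ENNReal.ofReal p ∧ μ {ω | B ω = 0} = ENNReal.ofReal (1 - p)) ∧
      ∫ ω, |(L ω : ℝ) - (B ω : ℝ)| ∂μ = 2 * (Real.exp (-p) - (1 - p)) := by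
  obtain ⟨hp0, hp1⟩ := hp
  have hw := w_nonneg ⟨hp0, hp1⟩
  set μ : Measure ℕ := Measure.sum (fun n => ENNReal.ofReal (w p n) • Measure.dirac n) with hμ
  -- measure of an arbitrary set
  have hmeas : ∀ S : Set ℕ, MeasurableSet S := fun S => trivial
  have happly : ∀ S : Set ℕ, μ S = ∑' n, ENNReal.ofReal (w p n) * S.indicator 1 n := by
    intro S
    rw [hμ, Measure.sum_apply _ (hmeas S)]
    congr 1; funext n
    rw [Measure.smul_apply, Measure.dirac_apply' _ (hmeas S), smul_eq_mul]
  have hsingle : ∀ m : ℕ, μ {m} = ENNReal.ofReal (w p m) := by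
    intro m
    rw [happly]
    rw [tsum_eq_single m]
    · simp
    · intro n hn
      simp [Set.indicator_of_notMem, hn]
  have hofReal_tsum : ∑' n, ENNReal.ofReal (w p n) = 1 := by
    rw [← ENNReal.ofReal_tsum_of_nonneg hw (summable_w p), tsum_w]
    simp
  have hprob : IsProbabilityMeasure μ := by
    constructor
    rw [happly]
    simpa using hofReal_tsum
  refine ⟨ℕ, inferInstance, μ, hprob, Lf, Bf, measurable_of_countable _,
    measurable_of_countable _, ?_, ⟨?_, ?_⟩, ?_⟩
  · -- Poisson marginal
    intro k
    match k with
    | 0 =>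
      have hset : {ω : ℕ | Lf ω = 0} = {0} ∪ {1} := by
        ext n; match n with
        | 0 => simp [Lf]
        | 1 => simp [Lf]
        | (k+2) => simp [Lf]
      rw [hset, measure_union (by simp) (hmeas _), hsingle, hsingle]
      have h1 : (0:ℝ) ≤ Real.exp (-p) - (1-p) := by
        have := Real.add_one_le_exp (-p); linarith
      have hw0 : w p 0 = 1 - p := rfl
      have hw1 : w p 1 = Real.exp (-p) - (1 - p) := rfl
      rw [hw0, hw1, ← ENNReal.ofReal_add (by linarith) h1]
      congr 1
      norm_num
    | (k+1) =>
      have hset : {ω : ℕ | Lf ω = k + 1} = {k + 2} := by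
        ext n; match n with
        | 0 => simp [Lf]
        | 1 => simp [Lf]
        | (m+2) => simp [Lf]
      rw [hset, hsingle]
      show ENNReal.ofReal (Real.exp (-p) * (p ^ (k+1) / (k+1).factorial)) = _
      rw [mul_div_assoc]
  · -- B = 1
    have hset : {ω : ℕ | Bf ω = 1} = ({0} : Set ℕ)ᶜ := by
      ext n; match n with
      | 0 => simp [Bf]
      | (m+1) => simp [Bf]
    rw [hset, measure_compl (hmeas _) (measure_ne_top μ _), hsingle,
      measure_univ]
    show 1 - ENNReal.ofReal (1 - p) = _
    rw [← ENNReal.ofReal_one, ← ENNReal.ofReal_sub _ (by linarith)]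
    norm_num
  · -- B = 0
    have hset : {ω : ℕ | Bf ω = 0} = ({0} : Set ℕ) := by
      ext n; match n with
      | 0 => simp [Bf]
      | (m+1) => simp [Bf]
    rw [hset, hsingle]
    rfl
  · -- the integral
    set F : ℕ → ℝ := fun n => |(Lf n : ℝ) - (Bf n : ℝ)| with hF
    have hFnonneg : ∀ n, 0 ≤ F n := fun n => abs_nonneg _
    have hF0 : F 0 = 0 := by simp [hF, Lf, Bf]
    have hF1 : F 1 = 1 := by simp [hF, Lf, Bf]
    have hF2 : ∀ k : ℕ, F (k+2) = k := by
      intro k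
      show |((k+1 : ℕ) : ℝ) - ((1:ℕ):ℝ)| = k
      push_cast
      rw [show ((k:ℝ) + 1 - 1) = k by ring, abs_of_nonneg (Nat.cast_nonneg k)]
    -- summability of F * w
    have hsum2 : Summable (fun k : ℕ => F (k+2) * w p (k+2)) := by
      have : (fun k : ℕ => F (k+2) * w p (k+2)) =
          fun k : ℕ => Real.exp (-p) * ((k : ℝ) * (p ^ (k+1) / (k+1).factorial)) := by
        funext k
        rw [hF2]
        show (k : ℝ) * (Real.exp (-p) * (p ^ (k+1) / (k+1).factorial)) = _
        ring
      rw [this]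
      have hsub : Summable (fun k : ℕ => (k : ℝ) * (p ^ (k+1) / (k+1).factorial)) := by
        have heq : (fun k : ℕ => (k : ℝ) * (p ^ (k+1) / (k+1).factorial)) =
            fun k : ℕ => p * (p ^ k / k.factorial) - p ^ (k+1) / (k+1).factorial := by
          funext k
          rw [Nat.factorial_succ]
          have hk : ((k.factorial : ℝ)) ≠ 0 := by positivity
          have hk1 : ((k:ℝ) + 1) ≠ 0 := by positivity
          push_cast
          field_simp
          ring
        rw [heq]
        exact ((Real.summable_pow_div_factorial p).mul_left p).sub (summable_shift p)
      exact hsub.mul_left _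
    have hsumFw : Summable (fun n : ℕ => F n * w p n) :=
      (summable_nat_add_iff 2).mp hsum2
    -- value of the real sum
    have htsumFw : ∑' n, F n * w p n = 2 * (Real.exp (-p) - (1 - p)) := by
      have h1 : Summable (fun n => F (n+1) * w p (n+1)) :=
        (summable_nat_add_iff (f := fun n => F n * w p n) 1).mpr hsumFw
      rw [Summable.tsum_eq_zero_add hsumFw, Summable.tsum_eq_zero_add h1]
      have h2 : (fun n : ℕ => F (n + 1 + 1) * w p (n + 1 + 1)) =
          fun k : ℕ => Real.exp (-p) * ((k : ℝ) * (p ^ (k+1) / (k+1).factorial)) := by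
        funext k
        rw [show k + 1 + 1 = k + 2 from rfl, hF2]
        show (k : ℝ) * (Real.exp (-p) * (p ^ (k+1) / (k+1).factorial)) = _
        ring
      rw [h2, tsum_mul_left, tsum_main]
      have hexp : Real.exp (-p) * Real.exp p = 1 := by
        rw [← Real.exp_add]; simp
      have hw0 : w p 0 = 1 - p := rfl
      have hw1 : w p 1 = Real.exp (-p) - (1 - p) := rfl
      have e0 : F 0 = 0 := hF0
      have e1 : F (0 + 1) = 1 := hF1
      rw [e0, e1, hw0, hw1]
      nlinarith [hexp]
    -- convert Bochner integral to the sum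
    rw [integral_eq_lintegral_of_nonneg_ae (Filter.Eventually.of_forall hFnonneg)
      ((measurable_of_countable F).aestronglyMeasurable)]
    rw [lintegral_countable' (fun n => ENNReal.ofReal (F n))]
    have : ∑' n, ENNReal.ofReal (F n) * μ {n} = ENNReal.ofReal (∑' n, F n * w p n) := by
      rw [ENNReal.ofReal_tsum_of_nonneg (fun n => mul_nonneg (hFnonneg n) (hw n)) hsumFw]
      congr 1; funext n
      rw [hsingle, ENNReal.ofReal_mul (hFnonneg n)]
    rw [this, htsumFw, ENNReal.toReal_ofReal]
    have := Real.add_one_le_exp (-p)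
    linarith
end

section
/- Let $n \geq 1$ be an integer and $p \in (0,1)$. There exist a probability space and random variables $L$ and $B$ defined on it such that $L$ has the Poisson distribution with parameter $np$, $B$ has the binomial distribution with parameters $(n,p)$, and $E|L - B| \leq np^2$. -/
/-!
Couple a Bernoulli(p) variable `B` with a Poisson(p) variable `L` by letting `B = 1` whenever
`L ≥ 1`, and, when `L = 0`, letting `B = 1` with an independent probability `θ` tuned so that
`P(B = 0) = 1 - p`. Since `E L = E B = p`, we get `E|L - B| = 2 E(B - L)⁺ = 2 P(L = 0, B = 1)
= 2 (e^{-p} - 1 + p) ≤ p²`. The sum of `n` independent copies of this pair couples Poisson(np)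
with Binomial(n, p), and `E|L - B|` is subadditive under such sums.
-/

open MeasureTheory Real ProbabilityTheory MeasureTheory.Measure
open scoped ENNReal NNReal unitInterval

lemma Real.exp_neg_le_one_sub_add_sq_div_two {x : ℝ} (hx : 0 ≤ x) :
    exp (-x) ≤ 1 - x + x ^ 2 / 2 := by
  have h := quadratic_le_exp_of_nonneg hx
  rw [exp_neg, inv_le_iff_one_le_mul₀ (exp_pos x)]
  nlinarith [mul_le_mul_of_nonneg_right h (show 0 ≤ 1 - x + x ^ 2 / 2 by nlinarith)]

lemma ofReal_abs_sub_add_eq (a b : ℕ) :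
    ENNReal.ofReal |(a : ℝ) - b| + b = a + 2 * ((b - a : ℕ) : ℝ≥0∞) := by
  rcases le_total a b with hab | hab
  · obtain ⟨k, rfl⟩ := Nat.exists_eq_add_of_le hab
    rw [show ((a : ℝ) - (a + k : ℕ)) = -k by push_cast; ring, abs_neg, Nat.abs_cast,
      ENNReal.ofReal_natCast, Nat.add_sub_cancel_left]
    push_cast
    ring
  · obtain ⟨k, rfl⟩ := Nat.exists_eq_add_of_le hab
    rw [show ((b + k : ℕ) : ℝ) - b = k by push_cast; ring, Nat.abs_cast,
      ENNReal.ofReal_natCast, Nat.sub_eq_zero_of_le (Nat.le_add_right b k)]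
    push_cast
    ring

lemma ofReal_abs_fst_sub_snd_add_le (x y : ℕ × ℕ) :
    ENNReal.ofReal |((x + y).1 : ℝ) - (x + y).2| ≤
      ENNReal.ofReal |(x.1 : ℝ) - x.2| + ENNReal.ofReal |(y.1 : ℝ) - y.2| := by
  rw [← ENNReal.ofReal_add (abs_nonneg _) (abs_nonneg _)]
  refine ENNReal.ofReal_le_ofReal ((le_of_eq ?_).trans (abs_add_le _ _))
  push_cast [Prod.fst_add, Prod.snd_add]
  ring_nf

namespace MeasureTheory.Measure

variable {M N : Type*} [AddMonoid M] [MeasurableSpace M]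

noncomputable def convPow (μ : Measure M) : ℕ → Measure M
  | 0 => dirac 0
  | n + 1 => convPow μ n ∗ μ

@[simp] lemma convPow_zero (μ : Measure M) : convPow μ 0 = dirac 0 := rfl

lemma convPow_succ (μ : Measure M) (n : ℕ) : convPow μ (n + 1) = convPow μ n ∗ μ := rfl

variable [MeasurableAdd₂ M]

instance sFinite_convPow (μ : Measure M) [SFinite μ] (n : ℕ) : SFinite (convPow μ n) := by
  induction n with
  | zero => rw [convPow_zero]; infer_instance
  | succ n ih => rw [convPow_succ]; infer_instance

instance isProbabilityMeasure_convPow (μ : Measure M) [IsProbabilityMeasure μ] (n : ℕ) :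
    IsProbabilityMeasure (convPow μ n) := by
  induction n with
  | zero => rw [convPow_zero]; infer_instance
  | succ n ih => rw [convPow_succ]; infer_instance

lemma map_convPow [AddMonoid N] [MeasurableSpace N] [MeasurableAdd₂ N]
    (μ : Measure M) [SFinite μ] (f : M →+ N) (hf : Measurable f) (n : ℕ) :
    (convPow μ n).map f = convPow (μ.map f) n := by
  induction n with
  | zero => simp [map_dirac' hf]
  | succ n ih => rw [convPow_succ, convPow_succ, map_conv_addMonoidHom f hf, ih]

lemma lintegral_convPow_le (μ : Measure M) [IsProbabilityMeasure μ] {c : M → ℝ≥0∞}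
    (hc : Measurable c) (hc_zero : c 0 = 0) (hc_add : ∀ x y, c (x + y) ≤ c x + c y) (n : ℕ) :
    ∫⁻ x, c x ∂convPow μ n ≤ n * ∫⁻ x, c x ∂μ := by
  induction n with
  | zero => simp [lintegral_dirac' _ hc, hc_zero]
  | succ n ih =>
    calc ∫⁻ x, c x ∂convPow μ (n + 1)
        = ∫⁻ x, ∫⁻ y, c (x + y) ∂μ ∂convPow μ n := by
          rw [convPow_succ, lintegral_conv hc]
      _ ≤ ∫⁻ x, ∫⁻ y, (c x + c y) ∂μ ∂convPow μ n := by
          gcongr with x y; exact hc_add x y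
      _ = ∫⁻ x, c x ∂convPow μ n + ∫⁻ y, c y ∂μ := by
        simp_rw [lintegral_add_right _ hc, lintegral_const, measure_univ, mul_one]
        rw [lintegral_add_right _ measurable_const, lintegral_const, measure_univ, mul_one]
      _ ≤ (n + 1 : ℕ) * ∫⁻ x, c x ∂μ := by push_cast; rw [add_mul, one_mul]; gcongr

lemma conv_bernoulliMeasure (μ : Measure M) [SFinite μ] (x y : M) (p : I) :
    μ ∗ Ber(x, y, p) = unitInterval.toNNReal p • μ.map (· + x) +
      unitInterval.toNNReal (σ p) • μ.map (· + y) := by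
  simp_rw [bernoulliMeasure_def, conv_add, ENNReal.smul_def, conv_smul_right, conv_dirac]

end MeasureTheory.Measure

namespace ProbabilityTheory

lemma poissonMeasure_zero : Po(0) = dirac 0 := by
  refine ext_of_singleton fun k ↦ ?_
  rcases k with _ | k <;> simp [poissonMeasure_singleton]

lemma convPow_poissonMeasure (r : ℝ≥0) (n : ℕ) : convPow Po(r) n = Po(n * r) := by
  induction n with
  | zero => simp [poissonMeasure_zero]
  | succ n ih =>
    rw [convPow_succ, ih, poissonMeasure_conv_poissonMeasure, Nat.cast_succ, add_one_mul]

lemma lintegral_natCast_poissonMeasure (r : ℝ≥0) : ∫⁻ n, (n : ℝ≥0∞) ∂Po(r) = r := by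
  rw [lintegral_countable', tsum_eq_zero_add' ENNReal.summable]
  have h_shift (n : ℕ) : ((n + 1 : ℕ) : ℝ≥0∞) * Po(r) {n + 1} = r * Po(r) {n} := by
    rw [poissonMeasure_singleton, poissonMeasure_singleton, ← ENNReal.ofReal_natCast,
      ← ENNReal.ofReal_coe_nnreal, ← ENNReal.ofReal_mul (by positivity),
      ← ENNReal.ofReal_mul (by positivity), Nat.factorial_succ]
    congr 1
    push_cast
    field_simp
    ring
  have h_total : ∑' n, Po(r) {n} = 1 := by
    simpa using (lintegral_countable' (μ := Po(r)) fun _ ↦ (1 : ℝ≥0∞)).symm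
  rw [Nat.cast_zero, zero_mul, zero_add]
  simp_rw [h_shift, ENNReal.tsum_mul_left, h_total, mul_one]

lemma lintegral_natCast_bernoulliMeasure (p : I) :
    ∫⁻ n : ℕ, (n : ℝ≥0∞) ∂Ber(1, 0, p) = unitInterval.toNNReal p := by
  simp [bernoulliMeasure_def, lintegral_add_measure]

lemma binomial_conv_bernoulliMeasure (n : ℕ) (p : I) :
    Bin(n, p) ∗ Ber(1, 0, p) = Bin(n + 1, p) := by
  refine ext_of_measureReal_singleton fun k ↦ ?_
  rw [conv_bernoulliMeasure, measureReal_add_apply, measureReal_nnreal_smul_apply,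
    measureReal_nnreal_smul_apply, map_measureReal_apply (by fun_prop) (measurableSet_singleton _),
    map_measureReal_apply (by fun_prop) (measurableSet_singleton _)]
  simp only [add_zero, Set.preimage_id']
  rcases k with _ | k
  · have : (· + 1) ⁻¹' {0} = (∅ : Set ℕ) := by ext; simp
    simp [this, binomial_real_singleton]
    ring
  · have : (· + 1) ⁻¹' {k + 1} = ({k} : Set ℕ) := by ext; simp
    simp only [this, binomial_real_singleton, unitInterval.coe_toNNReal, unitInterval.coe_symm_eq,
      Nat.choose_succ_succ', Nat.add_sub_add_right]
    push_cast
    rcases le_or_gt n k with hnk | hkn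
    · simp only [Nat.choose_eq_zero_of_lt (Nat.lt_succ_of_le hnk)]
      ring
    · obtain ⟨m, rfl⟩ := Nat.exists_eq_add_of_lt hkn
      rw [show k + m + 1 - k = m + 1 by omega, show k + m + 1 - (k + 1) = m by omega]
      ring

lemma convPow_bernoulliMeasure (p : I) (n : ℕ) : convPow Ber(1, 0, p) n = Bin(n, p) := by
  induction n with
  | zero => rw [convPow_zero, binomial_zero]
  | succ n ih => rw [convPow_succ, ih, binomial_conv_bernoulliMeasure]

lemma lintegral_ofReal_abs_sub_eq_two_mul (μ : Measure (ℕ × ℕ))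
    (h_mean : ∫⁻ z, (z.1 : ℝ≥0∞) ∂μ = ∫⁻ z, (z.2 : ℝ≥0∞) ∂μ)
    (h_finite : ∫⁻ z, (z.2 : ℝ≥0∞) ∂μ ≠ ∞) :
    ∫⁻ z, ENNReal.ofReal |(z.1 : ℝ) - z.2| ∂μ =
      2 * ∫⁻ z, ((z.2 - z.1 : ℕ) : ℝ≥0∞) ∂μ := by
  have h := lintegral_congr (μ := μ) fun z ↦ ofReal_abs_sub_add_eq z.1 z.2
  rw [lintegral_add_right _ .of_discrete, lintegral_add_left .of_discrete,
    lintegral_const_mul _ .of_discrete, h_mean] at h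
  rwa [add_comm, ENNReal.add_right_inj h_finite] at h

-- Chosen so that `exp (-p) * (1 - θ) = 1 - p`, the probability that `B = 0`.
noncomputable def poissonBernoulliOverride (p : ℝ) : ℝ := 1 - (1 - p) * exp p

lemma exp_neg_mul_poissonBernoulliOverride (p : ℝ) :
    exp (-p) * poissonBernoulliOverride p = exp (-p) - (1 - p) := by
  rw [poissonBernoulliOverride, mul_sub, mul_one, mul_left_comm, ← exp_add, neg_add_cancel,
    exp_zero, mul_one]

lemma poissonBernoulliOverride_nonneg (p : ℝ) : 0 ≤ poissonBernoulliOverride p := by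
  have h_θ := exp_neg_mul_poissonBernoulliOverride p
  have : 1 - p ≤ exp (-p) := by linarith [add_one_le_exp (-p)]
  nlinarith [exp_pos (-p)]

lemma poissonBernoulliOverride_le_one {p : ℝ} (hp : p ≤ 1) :
    poissonBernoulliOverride p ≤ 1 := by
  have := mul_nonneg (sub_nonneg.2 hp) (exp_pos p).le
  rw [poissonBernoulliOverride]
  linarith

noncomputable def poissonBernoulliCoupling (p : I) : Measure (ℕ × ℕ) :=
  (poissonBernoulliOverride p).toNNReal • Po(unitInterval.toNNReal p).map (fun l ↦ (l, 1)) +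
    (1 - poissonBernoulliOverride p).toNNReal •
      Po(unitInterval.toNNReal p).map (fun l ↦ (l, min l 1))

namespace poissonBernoulliCoupling

variable (p : I)

lemma map_fst : (poissonBernoulliCoupling p).map Prod.fst = Po(unitInterval.toNNReal p) := by
  rw [poissonBernoulliCoupling, Measure.map_add _ _ .of_discrete, Measure.map_smul,
    Measure.map_smul, map_map .of_discrete .of_discrete, map_map .of_discrete .of_discrete]
  simp only [Function.comp_def, map_id']
  rw [← add_smul, ← Real.toNNReal_add (poissonBernoulliOverride_nonneg p)
    (sub_nonneg.2 (poissonBernoulliOverride_le_one p.2.2)), add_sub_cancel, Real.toNNReal_one,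
    one_smul]

instance : IsProbabilityMeasure (poissonBernoulliCoupling p) := by
  constructor
  simpa [map_apply .of_discrete MeasurableSet.univ] using congrArg (· Set.univ) (map_fst p)

lemma map_snd : (poissonBernoulliCoupling p).map Prod.snd = Ber(1, 0, p) := by
  refine ext_of_measureReal_singleton fun k ↦ ?_
  rw [map_measureReal_apply .of_discrete (measurableSet_singleton k), poissonBernoulliCoupling,
    measureReal_add_apply, measureReal_nnreal_smul_apply, measureReal_nnreal_smul_apply,
    map_measureReal_apply .of_discrete .of_discrete,
    map_measureReal_apply .of_discrete .of_discrete,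
    Set.preimage_preimage, Set.preimage_preimage]
  have h_θ := exp_neg_mul_poissonBernoulliOverride p
  rw [Real.coe_toNNReal _ (poissonBernoulliOverride_nonneg p),
    Real.coe_toNNReal _ (sub_nonneg.2 (poissonBernoulliOverride_le_one p.2.2))]
  rcases k with _ | _ | k
  · have h1 : (fun _ : ℕ ↦ 1) ⁻¹' {0} = ∅ := by ext; simp
    have h2 : (fun l : ℕ ↦ min l 1) ⁻¹' {0} = {0} := by ext; simp
    simp [h1, h2, poissonMeasure_real_singleton]
    linear_combination -h_θ
  · have h2 : (fun l : ℕ ↦ min l 1) ⁻¹' {0 + 1} = {0}ᶜ := by ext; simp; omega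
    simp [h2, probReal_compl_eq_one_sub, poissonMeasure_real_singleton]
    linear_combination h_θ
  · have h1 : (fun _ : ℕ ↦ 1) ⁻¹' {k + 1 + 1} = ∅ := by ext; simp
    have h2 : (fun l : ℕ ↦ min l 1) ⁻¹' {k + 1 + 1} = ∅ := by ext; simp; omega
    simp [h1, h2]

lemma lintegral_snd_sub_fst :
    ∫⁻ z, ((z.2 - z.1 : ℕ) : ℝ≥0∞) ∂poissonBernoulliCoupling p =
      ENNReal.ofReal (exp (-p) - (1 - p)) := by
  have h_one_sub : (fun l : ℕ ↦ ((1 - l : ℕ) : ℝ≥0∞)) = Set.indicator {0} 1 := by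
    ext (_ | l) <;> simp
  have h_min_sub (l : ℕ) : ((min l 1 - l : ℕ) : ℝ≥0∞) = 0 := by simp
  rw [poissonBernoulliCoupling, lintegral_add_measure, lintegral_smul_measure,
    lintegral_smul_measure, lintegral_map .of_discrete .of_discrete,
    lintegral_map .of_discrete .of_discrete]
  simp only [h_min_sub, lintegral_zero, smul_zero, add_zero, h_one_sub,
    lintegral_indicator_one (measurableSet_singleton 0)]
  rw [poissonMeasure_singleton, ENNReal.smul_def, smul_eq_mul, ← ENNReal.ofReal.eq_def,
    ← ENNReal.ofReal_mul (poissonBernoulliOverride_nonneg p), mul_comm]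
  simp [exp_neg_mul_poissonBernoulliOverride]

lemma lintegral_ofReal_abs_sub_le :
    ∫⁻ z, ENNReal.ofReal |(z.1 : ℝ) - z.2| ∂poissonBernoulliCoupling p ≤
      ENNReal.ofReal ((p : ℝ) ^ 2) := by
  have h_fst :
      ∫⁻ z, (z.1 : ℝ≥0∞) ∂poissonBernoulliCoupling p = unitInterval.toNNReal p := by
    rw [← lintegral_map .of_discrete measurable_fst, map_fst, lintegral_natCast_poissonMeasure]
  have h_snd :
      ∫⁻ z, (z.2 : ℝ≥0∞) ∂poissonBernoulliCoupling p = unitInterval.toNNReal p := by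
    rw [← lintegral_map .of_discrete measurable_snd, map_snd, lintegral_natCast_bernoulliMeasure]
  rw [lintegral_ofReal_abs_sub_eq_two_mul _ (h_fst.trans h_snd.symm) (h_snd ▸ ENNReal.coe_ne_top),
    lintegral_snd_sub_fst, ← ENNReal.ofReal_ofNat, ← ENNReal.ofReal_mul zero_le_two]
  apply ENNReal.ofReal_le_ofReal
  linarith [exp_neg_le_one_sub_add_sq_div_two p.2.1]

end poissonBernoulliCoupling

noncomputable def poissonBinomialCoupling (p : I) (n : ℕ) : Measure (ℕ × ℕ) :=
  convPow (poissonBernoulliCoupling p) n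

namespace poissonBinomialCoupling

variable (p : I) (n : ℕ)

instance : IsProbabilityMeasure (poissonBinomialCoupling p n) :=
  isProbabilityMeasure_convPow _ n

lemma map_fst : (poissonBinomialCoupling p n).map Prod.fst = Po(n * unitInterval.toNNReal p) := by
  rw [poissonBinomialCoupling, ← AddMonoidHom.coe_fst, map_convPow _ _ measurable_fst,
    AddMonoidHom.coe_fst, poissonBernoulliCoupling.map_fst, convPow_poissonMeasure]

lemma map_snd : (poissonBinomialCoupling p n).map Prod.snd = Bin(n, p) := by
  rw [poissonBinomialCoupling, ← AddMonoidHom.coe_snd, map_convPow _ _ measurable_snd,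
    AddMonoidHom.coe_snd, poissonBernoulliCoupling.map_snd, convPow_bernoulliMeasure]

lemma lintegral_ofReal_abs_sub_le :
    ∫⁻ z, ENNReal.ofReal |(z.1 : ℝ) - z.2| ∂poissonBinomialCoupling p n ≤
      n * ENNReal.ofReal ((p : ℝ) ^ 2) := by
  refine (lintegral_convPow_le _ .of_discrete (by simp) ofReal_abs_fst_sub_snd_add_le n).trans ?_
  gcongr
  exact poissonBernoulliCoupling.lintegral_ofReal_abs_sub_le p

end poissonBinomialCoupling

end ProbabilityTheory

theorem exists_poisson_binomial_coupling_le_general (n : ℕ)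
    (p : ℝ) (hp : p ∈ Set.Ioo (0 : ℝ) 1) :
    ∃ (Ω : Type) (_ : MeasurableSpace Ω) (μ : Measure Ω) (_ : IsProbabilityMeasure μ)
      (L B : Ω → ℕ), Measurable L ∧ Measurable B ∧
      (∀ k : ℕ, μ {ω | L ω = k} =
        ENNReal.ofReal (Real.exp (-(n * p)) * (n * p) ^ k / (Nat.factorial k))) ∧
      (∀ k : ℕ, μ {ω | B ω = k} =
        ENNReal.ofReal ((n.choose k : ℝ) * p ^ k * (1 - p) ^ (n - k))) ∧
      ∫ ω, |(L ω : ℝ) - (B ω : ℝ)| ∂μ ≤ n * p ^ 2 := by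
  let q : I := ⟨p, hp.1.le, hp.2.le⟩
  refine ⟨ℕ × ℕ, inferInstance, poissonBinomialCoupling q n, inferInstance,
    Prod.fst, Prod.snd, measurable_fst, measurable_snd, fun k ↦ ?_, fun k ↦ ?_, ?_⟩
  · change poissonBinomialCoupling q n (Prod.fst ⁻¹' {k}) = _
    rw [← map_apply measurable_fst (measurableSet_singleton k),
      poissonBinomialCoupling.map_fst, poissonMeasure_singleton]
    simp [q]
  · change poissonBinomialCoupling q n (Prod.snd ⁻¹' {k}) = _
    rw [← map_apply measurable_snd (measurableSet_singleton k),
      poissonBinomialCoupling.map_snd, binomial_singleton]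
  · rw [integral_eq_lintegral_of_nonneg_ae (.of_forall fun _ ↦ abs_nonneg _) (by fun_prop)]
    refine ENNReal.toReal_le_of_le_ofReal (by positivity) ?_
    refine (poissonBinomialCoupling.lintegral_ofReal_abs_sub_le q n).trans_eq ?_
    rw [ENNReal.ofReal_mul (by positivity), ENNReal.ofReal_natCast]

/-- For `n ≥ 1` and `p ∈ (0,1)` there exists a coupling `(L, B)` of a Poisson(`n * p`)
random variable `L` and a binomial(`n`, `p`) random variable `B` with
`E|L - B| ≤ n * p ^ 2`. -/
theorem exists_poisson_binomial_coupling_le (n : ℕ) (hn : 1 ≤ n)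
    (p : ℝ) (hp : p ∈ Set.Ioo (0 : ℝ) 1) :
    ∃ (Ω : Type) (_ : MeasurableSpace Ω) (μ : Measure Ω) (_ : IsProbabilityMeasure μ)
      (L B : Ω → ℕ), Measurable L ∧ Measurable B ∧
      (∀ k : ℕ, μ {ω | L ω = k} =
        ENNReal.ofReal (Real.exp (-(n * p)) * (n * p) ^ k / (Nat.factorial k))) ∧
      (∀ k : ℕ, μ {ω | B ω = k} =
        ENNReal.ofReal ((n.choose k : ℝ) * p ^ k * (1 - p) ^ (n - k))) ∧
      ∫ ω, |(L ω : ℝ) - (B ω : ℝ)| ∂μ ≤ n * p ^ 2 :=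
  exists_poisson_binomial_coupling_le_general n p hp
end
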